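/- With λ, μ, b defined as in Polyanskiy's achievability bound, one has ρλ ≤ 1/2 (with strict inequality whenever ρ > 0), 0 ≤ μ, b ≤ ρλ, and consequently 1 − 2bρ₁ > 0, so that the logarithm ln(1 − 2bρ₁) appearing in the Gallager exponent E₀(ρ, ρ₁) = ρ₁a + (1/2)·ln(1 − 2bρ₁) is well defined. -/
import Mathlib

set_option maxHeartbeats 1600000


/-- With `λ`, `μ`, `b` as in Polyanskiy's achievability bound
(`P' > 0`, `t ≥ 1`, `ρ, ρ₁ ∈ [0,1]`), one has `ρλ ≤ 1/2` (strictly whenever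
`ρ > 0`), `0 ≤ μ`, `b ≤ ρλ`, and consequently `1 − 2bρ₁ > 0`, so that
`ln(1 − 2bρ₁)` in the Gallager exponent `E₀(ρ,ρ₁) = ρ₁a + (1/2)ln(1 − 2bρ₁)`
is well defined. -/
theorem polyanskiy_log_well_defined
    (P' t ρ ρ₁ : ℝ) (hP' : 0 < P') (ht : 1 ≤ t)
    (hρ : ρ ∈ Set.Icc (0 : ℝ) 1) (hρ₁ : ρ₁ ∈ Set.Icc (0 : ℝ) 1)
    (D lam μ b : ℝ)
    (hD : D = (P' * t - 1) ^ 2 + 4 * P' * t * (1 + ρ * ρ₁) / (1 + ρ))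
    (hlam : lam = (P' * t - 1 + Real.sqrt D) / (4 * (1 + ρ₁ * ρ) * P' * t))
    (hμ : μ = ρ * lam / (1 + 2 * P' * t * lam))
    (hb : b = ρ * lam - μ / (1 + 2 * P' * t * μ)) :
    ρ * lam ≤ 1 / 2 ∧ (0 < ρ → ρ * lam < 1 / 2) ∧
    0 ≤ μ ∧ b ≤ ρ * lam ∧ 0 < 1 - 2 * b * ρ₁ := by
  obtain ⟨hρ0, hρ1⟩ := hρ
  obtain ⟨hq0, hq1⟩ := hρ₁
  have hs : 0 < P' * t := mul_pos hP' (lt_of_lt_of_le one_pos ht)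
  have hc : 0 < 1 + ρ₁ * ρ := by nlinarith
  have hρp : 0 < 1 + ρ := by linarith
  have hA : 0 < 4 * (1 + ρ₁ * ρ) * (P' * t) := by positivity
  have hDge : (P' * t - 1) ^ 2 ≤ D := by
    rw [hD]
    have : 0 ≤ 4 * P' * t * (1 + ρ * ρ₁) / (1 + ρ) := by positivity
    linarith
  have hD0 : 0 ≤ D := le_trans (sq_nonneg _) hDge
  have hsqrt : |P' * t - 1| ≤ Real.sqrt D := by
    calc |P' * t - 1| = Real.sqrt ((P' * t - 1) ^ 2) := (Real.sqrt_sq_eq_abs _).symm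
    _ ≤ Real.sqrt D := Real.sqrt_le_sqrt hDge
  have hnum : 0 ≤ P' * t - 1 + Real.sqrt D := by
    have := neg_abs_le (P' * t - 1)
    linarith
  have hlam0 : 0 ≤ lam := by
    rw [hlam]
    apply div_nonneg hnum
    nlinarith [mul_pos hc hs]
  have hμ0 : 0 ≤ μ := by
    rw [hμ]
    apply div_nonneg (mul_nonneg hρ0 hlam0)
    nlinarith [mul_nonneg hs.le hlam0]
  -- the key strict inequality
  have hkey : ρ * lam < 1 / 2 := by
    rcases eq_or_lt_of_le hρ0 with h0 | hρpos
    · rw [← h0]; norm_num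
    · rw [hlam, show (4 * (1 + ρ₁ * ρ) * P' * t) = 4 * (1 + ρ₁ * ρ) * (P' * t) by ring,
        ← mul_div_assoc, div_lt_iff₀ hA]
      have hR : 0 < ρ + (2 + 2 * ρ₁ * ρ - ρ) * (P' * t) := by nlinarith
      have hsq : ρ * Real.sqrt D < ρ + (2 + 2 * ρ₁ * ρ - ρ) * (P' * t) := by
        have h1 : ρ * Real.sqrt D = Real.sqrt (ρ ^ 2 * D) := by
          rw [Real.sqrt_mul (sq_nonneg ρ), Real.sqrt_sq hρ0]
        rw [h1, Real.sqrt_lt' hR, hD, add_div' _ _ _ (ne_of_gt hρp), ← mul_div_assoc,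
          div_lt_iff₀ hρp]
        have h2 : 0 ≤ (1 + ρ) * (4 * (1 + ρ * ρ₁) * (1 + ρ * ρ₁ - ρ)) * (P' * t) ^ 2 := by
          have e1 : 0 ≤ 1 + ρ * ρ₁ - ρ := by nlinarith
          have e2 : 0 ≤ 1 + ρ * ρ₁ := by nlinarith
          positivity
        have h3 : 0 < 4 * ρ * (1 + ρ * ρ₁) * (P' * t) := by
          have e2 : 0 < 1 + ρ * ρ₁ := by nlinarith
          positivity
        linarith [h2, h3]
      linarith [hsq]
  have hbl : b ≤ ρ * lam := by
    rw [hb]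
    have : 0 ≤ μ / (1 + 2 * P' * t * μ) := by
      apply div_nonneg hμ0; nlinarith [mul_nonneg hs.le hμ0]
    linarith
  have hρlam0 : 0 ≤ ρ * lam := mul_nonneg hρ0 hlam0
  refine ⟨le_of_lt hkey, fun _ => hkey, hμ0, hbl, ?_⟩
  nlinarith [mul_nonneg (sub_nonneg.mpr hbl) hq0, mul_nonneg hρlam0 (sub_nonneg.mpr hq1)]
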